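/- arXiv:1812.06747 — 9 statements merged into one kernel-verified Lean document; each statement's English description precedes it below -/
import Mathlib

section
/- Let X be a set and R ⊆ X × X × X a ternary relation, with ⊙ the induced binary operation on subsets of X. Then the following are equivalent: (a) for all w, z, u, v ∈ X, (∃x, x R u v ∧ z R x w) ⟺ (∃x, x R v w ∧ z R u x) (constraint (C1)); (b) the operation ⊙ is associative, i.e. (U ⊙ V) ⊙ W = U ⊙ (V ⊙ W) for all U, V, W ⊆ X. -/
/-- `odot R U U' = {x : ∃ u ∈ U, ∃ u' ∈ U', x R u u'}`. -/
def odot {X : Type*} (R : X → X → X → Prop) (U U' : Set X) : Set X :=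
  {x | ∃ u ∈ U, ∃ u' ∈ U', R x u u'}

/-! Both bracketings of `U ⊙ V ⊙ W` unfold to a union over triples `(u, v, w) ∈ U × V × W` of the
two sides of (C1), so (C1) gives associativity, and singletons recover (C1) from associativity. -/

section

variable {X : Type*} (R : X → X → X → Prop) {U V W : Set X} {z : X}

theorem mem_odot_odot_left :
    z ∈ odot R (odot R U V) W ↔ ∃ u ∈ U, ∃ v ∈ V, ∃ w ∈ W, ∃ x, R x u v ∧ R z x w := by
  simp only [odot, Set.mem_ofPred_eq]
  constructor
  · rintro ⟨x, ⟨u, hu, v, hv, hx⟩, w, hw, hz⟩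
    exact ⟨u, hu, v, hv, w, hw, x, hx, hz⟩
  · rintro ⟨u, hu, v, hv, w, hw, x, hx, hz⟩
    exact ⟨x, ⟨u, hu, v, hv, hx⟩, w, hw, hz⟩

theorem mem_odot_odot_right :
    z ∈ odot R U (odot R V W) ↔ ∃ u ∈ U, ∃ v ∈ V, ∃ w ∈ W, ∃ x, R x v w ∧ R z u x := by
  simp only [odot, Set.mem_ofPred_eq]
  constructor
  · rintro ⟨u, hu, x, ⟨v, hv, w, hw, hx⟩, hz⟩
    exact ⟨u, hu, v, hv, w, hw, x, hx, hz⟩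
  · rintro ⟨u, hu, v, hv, w, hw, x, hx, hz⟩
    exact ⟨u, hu, x, ⟨v, hv, w, hw, hx⟩, hz⟩

end

/-- Constraint (C1) holds iff the induced operation `⊙` on subsets is associative. -/
theorem C1_iff_assoc {X : Type*} (R : X → X → X → Prop) :
    (∀ w z u v : X, (∃ x, R x u v ∧ R z x w) ↔ (∃ x, R x v w ∧ R z u x)) ↔
      (∀ U V W : Set X, odot R (odot R U V) W = odot R U (odot R V W)) := by
  constructor
  · intro hC1 U V W
    ext z
    rw [mem_odot_odot_left, mem_odot_odot_right]
    simp only [hC1]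
  · intro hassoc w z u v
    have hz := Set.ext_iff.mp (hassoc {u} {v} {w}) z
    simpa only [mem_odot_odot_left, mem_odot_odot_right, Set.mem_singleton_iff,
      exists_eq_left] using hz
end

section
/- Let (X, ⊑, Y) be a polarity frame and R ⊆ X × X × X a ternary relation, with ⊙ the induced binary operation on subsets of X and ≼ the induced preorder on X. If R satisfies (C3) (∀x, z, z' ∈ X, x R z z' → z' ≼ x), then ⊙ is thinning on ≼-increasing sets: U ⊙ W ⊆ W for all ≼-increasing U, W ⊆ X. -/
/-- The preorder `≼` on `X` induced by the polarity `⊑ ⊆ X × Y`. -/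
def preceq {X Y : Type*} (rel : X → Y → Prop) (x z : X) : Prop :=
  ∀ y : Y, rel x y → rel z y

/-- A subset of `X` is `≼`-increasing if it is upward closed under `≼`. -/
def Increasing {X Y : Type*} (rel : X → Y → Prop) (U : Set X) : Prop :=
  ∀ x z : X, preceq rel x z → x ∈ U → z ∈ U

theorem C3_implies_thinning_general {X Y : Type*}
    (rel : X → Y → Prop) (R : X → X → X → Prop)
    (hC3 : ∀ x z z' : X, R x z z' → preceq rel z' x) :
    ∀ U W : Set X, Increasing rel U → Increasing rel W → odot R U W ⊆ W := by
  rintro U W - hW x ⟨u, -, w, hw, hR⟩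
  exact hW w x (hC3 x u w hR) hw

/-- If `R` satisfies (C3), then `⊙` is thinning on `≼`-increasing sets:
    `U ⊙ W ⊆ W` for all `≼`-increasing `U, W ⊆ X`. -/
theorem C3_implies_thinning {X Y : Type*} [Nonempty X] [Nonempty Y]
    (rel : X → Y → Prop) (R : X → X → X → Prop)
    (hC3 : ∀ x z z' : X, R x z z' → preceq rel z' x) :
    ∀ U W : Set X, Increasing rel U → Increasing rel W → odot R U W ⊆ W :=
  C3_implies_thinning_general rel R hC3
end

section
/- Let (X, ⊑, Y) be a polarity frame and R ⊆ X × X × X a ternary relation, with ⊙ the induced binary operation on subsets of X and ≼ the induced preorder on X. If R satisfies (C2) (∀x, z, z', x R z z' ⟺ x R z' z) and (C3) (∀x, z, z', x R z z' → z' ≼ x), then U ⊙ W ⊆ U ∩ W for all ≼-increasing U, W ⊆ X. If moreover R satisfies (C4) (∀x, x R x x), then U ⊙ W = U ∩ W for all ≼-increasing U, W ⊆ X. -/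
section

variable {X Y : Type*} {rel : X → Y → Prop} {R : X → X → X → Prop} {U W : Set X}

theorem odot_comm (hC2 : ∀ x z z' : X, R x z z' ↔ R x z' z) (U W : Set X) :
    odot R U W = odot R W U := by
  ext x
  constructor <;>
  · rintro ⟨u, hu, w, hw, hR⟩
    exact ⟨w, hw, u, hu, (hC2 x u w).mp hR⟩

theorem odot_subset_right (hC3 : ∀ x z z' : X, R x z z' → preceq rel z' x)
    (hW : Increasing rel W) (U : Set X) : odot R U W ⊆ W := by
  rintro x ⟨u, -, w, hw, hR⟩
  exact hW w x (hC3 x u w hR) hw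

theorem odot_subset_inter (hC2 : ∀ x z z' : X, R x z z' ↔ R x z' z)
    (hC3 : ∀ x z z' : X, R x z z' → preceq rel z' x)
    (hU : Increasing rel U) (hW : Increasing rel W) : odot R U W ⊆ U ∩ W :=
  Set.subset_inter (odot_comm hC2 U W ▸ odot_subset_right hC3 hU W) (odot_subset_right hC3 hW U)

theorem inter_subset_odot (hC4 : ∀ x : X, R x x x) (U W : Set X) : U ∩ W ⊆ odot R U W :=
  fun x ⟨hxU, hxW⟩ => ⟨x, hxU, x, hxW, hC4 x⟩

end

theorem C2_C3_implies_odot_le_inter_general {X Y : Type*}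
    (rel : X → Y → Prop) (R : X → X → X → Prop)
    (hC2 : ∀ x z z' : X, R x z z' ↔ R x z' z)
    (hC3 : ∀ x z z' : X, R x z z' → preceq rel z' x) :
    (∀ U W : Set X, Increasing rel U → Increasing rel W → odot R U W ⊆ U ∩ W) ∧
    ((∀ x : X, R x x x) →
      ∀ U W : Set X, Increasing rel U → Increasing rel W → odot R U W = U ∩ W) :=
  ⟨fun _ _ hU hW => odot_subset_inter hC2 hC3 hU hW,
    fun hC4 U W hU hW =>
      (odot_subset_inter hC2 hC3 hU hW).antisymm (inter_subset_odot hC4 U W)⟩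

/-- If `R` satisfies (C2) and (C3), then `U ⊙ W ⊆ U ∩ W` for all `≼`-increasing
    `U, W`; if moreover (C4) holds, then `U ⊙ W = U ∩ W` for such sets. -/
theorem C2_C3_implies_odot_le_inter {X Y : Type*} [Nonempty X] [Nonempty Y]
    (rel : X → Y → Prop) (R : X → X → X → Prop)
    (hC2 : ∀ x z z' : X, R x z z' ↔ R x z' z)
    (hC3 : ∀ x z z' : X, R x z z' → preceq rel z' x) :
    (∀ U W : Set X, Increasing rel U → Increasing rel W → odot R U W ⊆ U ∩ W) ∧
    ((∀ x : X, R x x x) →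
      ∀ U W : Set X, Increasing rel U → Increasing rel W → odot R U W = U ∩ W) :=
  C2_C3_implies_odot_le_inter_general rel R hC2 hC3
end

section
/- Let (X, ⊑, Y) be a polarity frame and R ⊆ X × X × X a ternary relation; define y R^∂ u u' iff ∀x ∈ X (x R u u' → x ⊑ y). Then for all Galois stable sets A, C, F ⊆ X: (i) the conditions cl(A ⊙ F) ⊆ C, A ⊙ F ⊆ C, F ⊆ A ⇒ C, and A ⊆ C ⇐ F are all equivalent; (ii) A ⇒ C = {x ∈ X : ∀z ∈ X ∀v ∈ Y, (z ∈ A ∧ (∀c ∈ C, c ⊑ v)) → v R^∂ z x} and C ⇐ A = {x ∈ X : ∀z ∈ X ∀v ∈ Y, (z ∈ A ∧ (∀c ∈ C, c ⊑ v)) → v R^∂ x z}. -/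
/-- The upper Galois polar `U^⊥ = {y : ∀ x ∈ U, x ⊑ y}`. -/
def polar {X Y : Type*} (rel : X → Y → Prop) (U : Set X) : Set Y :=
  {y | ∀ x ∈ U, rel x y}

/-- The lower Galois polar `^⊥V = {x : ∀ y ∈ V, x ⊑ y}`. -/
def lpolar {X Y : Type*} (rel : X → Y → Prop) (V : Set Y) : Set X :=
  {x | ∀ y ∈ V, rel x y}

/-- The Galois closure `cl(U) = ^⊥(U^⊥)`. -/
def gcl {X Y : Type*} (rel : X → Y → Prop) (U : Set X) : Set X :=
  lpolar rel (polar rel U)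

/-- `rimp R U W = {x : ∀ z z', (z ∈ U ∧ z' R z x) → z' ∈ W}`. -/
def rimp {X : Type*} (R : X → X → X → Prop) (U W : Set X) : Set X :=
  {x | ∀ z z', z ∈ U ∧ R z' z x → z' ∈ W}

/-- `limp R W U = {x : ∀ z z', (z ∈ U ∧ z' R x z) → z' ∈ W}`. -/
def limp {X : Type*} (R : X → X → X → Prop) (W U : Set X) : Set X :=
  {x | ∀ z z', z ∈ U ∧ R z' x z → z' ∈ W}

/-- `y R^∂ u u'` iff `∀ x, x R u u' → x ⊑ y`. -/
def Rdual {X Y : Type*} (rel : X → Y → Prop) (R : X → X → X → Prop)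
    (y : Y) (u u' : X) : Prop :=
  ∀ x : X, R x u u' → rel x y

/-!
Part (i) is the residuation law for `⊙`, plus the fact that `cl` is a closure operator, so
`cl(U) ⊆ C ↔ U ⊆ C` for stable `C`. Part (ii) uses `C = ^⊥(C^⊥)`: `z' ∈ C` iff `z' ⊑ v` for every
`v ∈ C^⊥`, and quantifying this over all `z'` with `z' R z x` is exactly `v R^∂ z x`.
-/

section Galois

variable {X Y : Type*} (rel : X → Y → Prop)

theorem subset_gcl (U : Set X) : U ⊆ gcl rel U :=
  fun _ hx _ hy => hy _ hx

theorem gcl_mono {U V : Set X} (h : U ⊆ V) : gcl rel U ⊆ gcl rel V :=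
  fun _ hx y hy => hx y fun _ ha => hy _ (h ha)

variable {rel}

theorem gcl_subset_iff_of_stable {U C : Set X} (hC : gcl rel C = C) :
    gcl rel U ⊆ C ↔ U ⊆ C :=
  ⟨(subset_gcl rel U).trans, fun h => hC ▸ gcl_mono rel h⟩

theorem subset_iff_forall_polar_of_stable {U C : Set X} (hC : gcl rel C = C) :
    U ⊆ C ↔ ∀ v ∈ polar rel C, ∀ u ∈ U, rel u v :=
  ⟨fun h _ hv _ hu => hv _ (h hu), fun h u hu => hC ▸ fun v hv => h v hv u hu⟩

end Galois

section Residuation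

variable {X : Type*} (R : X → X → X → Prop)

theorem odot_subset_iff_subset_rimp {A C F : Set X} :
    odot R A F ⊆ C ↔ F ⊆ rimp R A C :=
  ⟨fun h _ hf _ _ ⟨hz, hR⟩ => h ⟨_, hz, _, hf, hR⟩,
    fun h _ ⟨_, hu, _, hu', hR⟩ => h hu' _ _ ⟨hu, hR⟩⟩

theorem odot_subset_iff_subset_limp {A C F : Set X} :
    odot R A F ⊆ C ↔ A ⊆ limp R C F :=
  ⟨fun h _ ha _ _ ⟨hz, hR⟩ => h ⟨_, ha, _, hz, hR⟩,
    fun h _ ⟨_, hu, _, hu', hR⟩ => h hu _ _ ⟨hu', hR⟩⟩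

variable {Y : Type*} {rel : X → Y → Prop}

theorem rimp_eq_of_stable {A C : Set X} (hC : gcl rel C = C) :
    rimp R A C = {x | ∀ z : X, ∀ v : Y,
      (z ∈ A ∧ (∀ c ∈ C, rel c v)) → Rdual rel R v z x} := by
  ext x
  have hx : x ∈ rimp R A C ↔ ∀ z ∈ A, {z' | R z' z x} ⊆ C :=
    ⟨fun hx z hz z' hR => hx z z' ⟨hz, hR⟩, fun hx z z' ⟨hz, hR⟩ => hx z hz hR⟩
  simp only [hx, subset_iff_forall_polar_of_stable hC]
  exact ⟨fun h z v ⟨hz, hv⟩ => h z hz v hv, fun h z hz v hv => h z v ⟨hz, hv⟩⟩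

theorem limp_eq_of_stable {A C : Set X} (hC : gcl rel C = C) :
    limp R C A = {x | ∀ z : X, ∀ v : Y,
      (z ∈ A ∧ (∀ c ∈ C, rel c v)) → Rdual rel R v x z} := by
  ext x
  have hx : x ∈ limp R C A ↔ ∀ z ∈ A, {z' | R z' x z} ⊆ C :=
    ⟨fun hx z hz z' hR => hx z z' ⟨hz, hR⟩, fun hx z z' ⟨hz, hR⟩ => hx z hz hR⟩
  simp only [hx, subset_iff_forall_polar_of_stable hC]
  exact ⟨fun h z v ⟨hz, hv⟩ => h z hz v hv, fun h z hz v hv => h z v ⟨hz, hv⟩⟩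

end Residuation

theorem stable_residuation_general {X Y : Type*}
    (rel : X → Y → Prop) (R : X → X → X → Prop)
    (A C F : Set X)
    (hC : gcl rel C = C) :
    ((gcl rel (odot R A F) ⊆ C ↔ odot R A F ⊆ C) ∧
     (odot R A F ⊆ C ↔ F ⊆ rimp R A C) ∧
     (odot R A F ⊆ C ↔ A ⊆ limp R C F)) ∧
    (rimp R A C = {x | ∀ z : X, ∀ v : Y,
        (z ∈ A ∧ (∀ c ∈ C, rel c v)) → Rdual rel R v z x} ∧
     limp R C A = {x | ∀ z : X, ∀ v : Y,
        (z ∈ A ∧ (∀ c ∈ C, rel c v)) → Rdual rel R v x z}) :=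
  ⟨⟨gcl_subset_iff_of_stable hC, odot_subset_iff_subset_rimp R, odot_subset_iff_subset_limp R⟩,
    rimp_eq_of_stable R hC, limp_eq_of_stable R hC⟩

/-- For Galois stable `A, C, F`: (i) `cl(A ⊙ F) ⊆ C`, `A ⊙ F ⊆ C`, `F ⊆ A ⇒ C`
    and `A ⊆ C ⇐ F` are all equivalent; (ii) the residuals on stable sets are
    characterized via the relation `R^∂`. -/
theorem stable_residuation {X Y : Type*} [Nonempty X] [Nonempty Y]
    (rel : X → Y → Prop) (R : X → X → X → Prop)
    (A C F : Set X)
    (hA : gcl rel A = A) (hC : gcl rel C = C) (hF : gcl rel F = F) :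
    ((gcl rel (odot R A F) ⊆ C ↔ odot R A F ⊆ C) ∧
     (odot R A F ⊆ C ↔ F ⊆ rimp R A C) ∧
     (odot R A F ⊆ C ↔ A ⊆ limp R C F)) ∧
    (rimp R A C = {x | ∀ z : X, ∀ v : Y,
        (z ∈ A ∧ (∀ c ∈ C, rel c v)) → Rdual rel R v z x} ∧
     limp R C A = {x | ∀ z : X, ∀ v : Y,
        (z ∈ A ∧ (∀ c ∈ C, rel c v)) → Rdual rel R v x z}) :=
  stable_residuation_general rel R A C F hC
end

section
/- Let L be a lattice with a binary operation ∘ that is monotone in each argument. Then: (i) for all filters x, z of L, the set x ∘̂ z is a filter of L; (ii) for principal filters, ↑a ∘̂ ↑b = ↑(a ∘ b) for all a, b ∈ L; (iii) if ∘ is associative, then x ∘̂ (z ∘̂ w) = (x ∘̂ z) ∘̂ w for all filters x, z, w; (iv) if ∘ is commutative, then x ∘̂ z = z ∘̂ x for all filters x, z. -/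
/-- A (lattice) filter: nonempty, upward closed and closed under binary meets. -/
def IsLatFilter {L : Type*} [Lattice L] (x : Set L) : Prop :=
  x.Nonempty ∧ (∀ a ∈ x, ∀ b : L, a ≤ b → b ∈ x) ∧ ∀ a ∈ x, ∀ b ∈ x, a ⊓ b ∈ x

/-- `x ∘̂ z = {c : ∃ a ∈ x, ∃ b ∈ z, a ∘ b ≤ c}`. -/
def fmul {L : Type*} [Lattice L] (f : L → L → L) (x z : Set L) : Set L :=
  {c | ∃ a ∈ x, ∃ b ∈ z, f a b ≤ c}

section FilterProduct

variable {L : Type*} [Lattice L] {f : L → L → L}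

theorem mem_fmul_of_mem {x z : Set L} {a b : L} (ha : a ∈ x) (hb : b ∈ z) :
    f a b ∈ fmul f x z :=
  ⟨a, ha, b, hb, le_rfl⟩

theorem fmul_mem_of_le {x z : Set L} {c c' : L} (hc : c ∈ fmul f x z) (hcc' : c ≤ c') :
    c' ∈ fmul f x z := by
  obtain ⟨a, ha, b, hb, hle⟩ := hc
  exact ⟨a, ha, b, hb, hle.trans hcc'⟩

theorem map₂_le_map₂ (hmono₁ : ∀ b, Monotone (f · b)) (hmono₂ : ∀ a, Monotone (f a))
    {a a' b b' : L} (ha : a ≤ a') (hb : b ≤ b') : f a b ≤ f a' b' :=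
  (hmono₁ b ha).trans (hmono₂ a' hb)

theorem IsLatFilter.fmul (hmono₁ : ∀ b, Monotone (f · b)) (hmono₂ : ∀ a, Monotone (f a))
    {x z : Set L} (hx : IsLatFilter x) (hz : IsLatFilter z) :
    IsLatFilter (fmul f x z) := by
  obtain ⟨⟨a₀, ha₀⟩, -, hx_inf⟩ := hx
  obtain ⟨⟨b₀, hb₀⟩, -, hz_inf⟩ := hz
  refine ⟨⟨f a₀ b₀, mem_fmul_of_mem ha₀ hb₀⟩, fun c hc c' => fmul_mem_of_le hc, ?_⟩
  rintro c ⟨a, ha, b, hb, hle⟩ c' ⟨a', ha', b', hb', hle'⟩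
  refine ⟨a ⊓ a', hx_inf a ha a' ha', b ⊓ b', hz_inf b hb b' hb', le_inf ?_ ?_⟩
  · exact (map₂_le_map₂ hmono₁ hmono₂ inf_le_left inf_le_left).trans hle
  · exact (map₂_le_map₂ hmono₁ hmono₂ inf_le_right inf_le_right).trans hle'

theorem fmul_Ici_Ici (hmono₁ : ∀ b, Monotone (f · b)) (hmono₂ : ∀ a, Monotone (f a))
    (a b : L) : fmul f (Set.Ici a) (Set.Ici b) = Set.Ici (f a b) := by
  ext c
  constructor
  · rintro ⟨a', ha', b', hb', hle⟩
    exact (map₂_le_map₂ hmono₁ hmono₂ ha' hb').trans hle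
  · exact fmul_mem_of_le (mem_fmul_of_mem le_rfl le_rfl)

theorem fmul_assoc (hmono₁ : ∀ b, Monotone (f · b)) (hmono₂ : ∀ a, Monotone (f a))
    (hassoc : ∀ a b c, f (f a b) c = f a (f b c)) (x z w : Set L) :
    fmul f x (fmul f z w) = fmul f (fmul f x z) w := by
  ext e
  constructor
  · rintro ⟨a, ha, d, ⟨b, hb, c, hc, hle⟩, hle'⟩
    refine ⟨f a b, mem_fmul_of_mem ha hb, c, hc, ?_⟩
    rw [hassoc]
    exact (hmono₂ a hle).trans hle'
  · rintro ⟨d, ⟨a, ha, b, hb, hle⟩, c, hc, hle'⟩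
    refine ⟨a, ha, f b c, mem_fmul_of_mem hb hc, ?_⟩
    rw [← hassoc]
    exact (hmono₁ c hle).trans hle'

theorem fmul_subset_fmul_swap (hcomm : ∀ a b, f a b = f b a) (x z : Set L) :
    fmul f x z ⊆ fmul f z x := by
  rintro c ⟨a, ha, b, hb, hle⟩
  exact ⟨b, hb, a, ha, (hcomm b a).trans_le hle⟩

theorem fmul_comm (hcomm : ∀ a b, f a b = f b a) (x z : Set L) :
    fmul f x z = fmul f z x :=
  (fmul_subset_fmul_swap hcomm x z).antisymm (fmul_subset_fmul_swap hcomm z x)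

end FilterProduct

/-- (i) `x ∘̂ z` is a filter for filters `x, z`; (ii) `↑a ∘̂ ↑b = ↑(a ∘ b)`;
    (iii) if `∘` is associative, so is `∘̂` on filters; (iv) if `∘` is
    commutative, so is `∘̂` on filters. -/
theorem fmul_properties {L : Type*} [Lattice L] (f : L → L → L)
    (hmono₁ : ∀ a a' b : L, a ≤ a' → f a b ≤ f a' b)
    (hmono₂ : ∀ a b b' : L, b ≤ b' → f a b ≤ f a b') :
    (∀ x z : Set L, IsLatFilter x → IsLatFilter z → IsLatFilter (fmul f x z)) ∧
    (∀ a b : L, fmul f (Set.Ici a) (Set.Ici b) = Set.Ici (f a b)) ∧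
    ((∀ a b c : L, f (f a b) c = f a (f b c)) →
      ∀ x z w : Set L, IsLatFilter x → IsLatFilter z → IsLatFilter w →
        fmul f x (fmul f z w) = fmul f (fmul f x z) w) ∧
    ((∀ a b : L, f a b = f b a) →
      ∀ x z : Set L, IsLatFilter x → IsLatFilter z → fmul f x z = fmul f z x) := by
  have hleft : ∀ b, Monotone (f · b) := fun b _ _ h => hmono₁ _ _ b h
  have hright : ∀ a, Monotone (f a) := fun a _ _ h => hmono₂ a _ _ h
  exact ⟨fun x z hx hz => hx.fmul hleft hright hz,
    fmul_Ici_Ici hleft hright,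
    fun hassoc x z w _ _ _ => fmul_assoc hleft hright hassoc x z w,
    fun hcomm x z _ _ => fmul_comm hcomm x z⟩
end

section
/- Let L be a residuated lattice with operations ∘, →, ←. For a filter x and an ideal y of L, define x →♭ y = {c ∈ L : ∃a ∈ x ∃b ∈ y, c ≤ a → b}. Then for all filters x, z and every ideal y of L: (x ∘̂ z) ∩ y is nonempty if and only if z ∩ (x →♭ y) is nonempty. -/
/-- A (lattice) ideal: nonempty, downward closed and closed under binary joins. -/
def IsLatIdeal {L : Type*} [Lattice L] (y : Set L) : Prop :=
  y.Nonempty ∧ (∀ a ∈ y, ∀ b : L, b ≤ a → b ∈ y) ∧ ∀ a ∈ y, ∀ b ∈ y, a ⊔ b ∈ y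

/-- `x →♭ y = {c : ∃ a ∈ x, ∃ b ∈ y, c ≤ a → b}` for a filter `x` and an
    ideal `y`. -/
def fimp {L : Type*} [Lattice L] (ri : L → L → L) (x y : Set L) : Set L :=
  {c | ∃ a ∈ x, ∃ b ∈ y, c ≤ ri a b}

theorem fmul_inter_nonempty_iff_inter_fimp_nonempty {L : Type*} [Lattice L]
    {f ri : L → L → L} (hres : ∀ a b c : L, f a b ≤ c ↔ b ≤ ri a c) (x z y : Set L) :
    (fmul f x z ∩ y).Nonempty ↔ (z ∩ fimp ri x y).Nonempty := by
  constructor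
  · rintro ⟨c, ⟨a, ha, b, hb, hab⟩, hc⟩
    exact ⟨b, hb, a, ha, c, hc, (hres a b c).mp hab⟩
  · rintro ⟨b, hb, a, ha, c, hc, hb_le⟩
    exact ⟨c, ⟨a, ha, b, hb, (hres a b c).mpr hb_le⟩, hc⟩

/-- In a residuated lattice, for filters `x, z` and an ideal `y`:
    `(x ∘̂ z) ∩ y` is nonempty iff `z ∩ (x →♭ y)` is nonempty. -/
theorem fmul_fimp_galois {L : Type*} [Lattice L]
    (f ri li : L → L → L)
    (hres : ∀ a b c : L, (f a b ≤ c ↔ b ≤ ri a c) ∧ (f a b ≤ c ↔ a ≤ li c b)) :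
    ∀ x z y : Set L, IsLatFilter x → IsLatFilter z → IsLatIdeal y →
      ((fmul f x z ∩ y).Nonempty ↔ (z ∩ fimp ri x y).Nonempty) :=
  fun x z y _ _ _ =>
    fmul_inter_nonempty_iff_inter_fimp_nonempty (fun a b c => (hres a b c).1) x z y
end

section
/- Let L be a residuated lattice with operations ∘, →, ←, let x be a filter of L, and let a, b ∈ L. Then a → b ∈ x if and only if for every filter z and every ideal y of L with a ∈ z and b ∈ y, the set (z ∘̂ x) ∩ y is nonempty. -/
/-! Taking for `z` and `y` the principal filter `↑a` and the principal ideal `↓b` already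
reduces the right-hand side to `∃ c ∈ x, a ∘ c ≤ b`, i.e. `∃ c ∈ x, c ≤ a → b`; the filter
being upward closed turns this into `a → b ∈ x`. Conversely `b` itself lies in `z ∘̂ x`, as
`a ∘ (a → b) ≤ b`. -/

section

variable {L : Type*} [Lattice L]

theorem isLatFilter_Ici (a : L) : IsLatFilter (Set.Ici a) :=
  ⟨⟨a, le_rfl⟩, fun _ hu _ huv => hu.trans huv, fun _ hu _ hv => le_inf hu hv⟩

theorem isLatIdeal_Iic (b : L) : IsLatIdeal (Set.Iic b) :=
  ⟨⟨b, le_rfl⟩, fun _ hu _ hvu => hvu.trans hu, fun _ hu _ hv => sup_le hu hv⟩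

theorem IsLatFilter.mem_of_le {x : Set L} (hx : IsLatFilter x) {a b : L} (ha : a ∈ x)
    (hab : a ≤ b) : b ∈ x :=
  hx.2.1 a ha b hab

theorem mul_le_mul_right_of_residuated {f li : L → L → L}
    (hli : ∀ a b c : L, f a b ≤ c ↔ a ≤ li c b) {a a' : L} (h : a ≤ a') (b : L) :
    f a b ≤ f a' b :=
  (hli a b _).2 (h.trans ((hli a' b _).1 le_rfl))

theorem fmul_Ici_inter_Iic_nonempty_iff {f li : L → L → L}
    (hli : ∀ a b c : L, f a b ≤ c ↔ a ≤ li c b) (x : Set L) (a b : L) :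
    (fmul f (Set.Ici a) x ∩ Set.Iic b).Nonempty ↔ ∃ c ∈ x, f a c ≤ b := by
  constructor
  · rintro ⟨d, ⟨a', ha', c, hc, hle⟩, hdb⟩
    exact ⟨c, hc, (mul_le_mul_right_of_residuated hli ha' c).trans (hle.trans hdb)⟩
  · rintro ⟨c, hc, hle⟩
    exact ⟨b, ⟨a, le_rfl, c, hc, hle⟩, le_rfl⟩

end

/-- In a residuated lattice, for a filter `x`: `a → b ∈ x` iff for every
    filter `z` and ideal `y` with `a ∈ z` and `b ∈ y`, the set `(z ∘̂ x) ∩ y`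
    is nonempty. -/
theorem rimp_mem_filter_iff {L : Type*} [Lattice L]
    (f ri li : L → L → L)
    (hres : ∀ a b c : L, (f a b ≤ c ↔ b ≤ ri a c) ∧ (f a b ≤ c ↔ a ≤ li c b))
    (x : Set L) (hx : IsLatFilter x) (a b : L) :
    ri a b ∈ x ↔
      ∀ z y : Set L, IsLatFilter z → IsLatIdeal y → a ∈ z → b ∈ y →
        (fmul f z x ∩ y).Nonempty := by
  have hri : ∀ c, f a c ≤ b ↔ c ≤ ri a b := fun c => (hres a c b).1
  constructor
  · intro h z y _ _ haz hby
    exact ⟨b, ⟨a, haz, ri a b, h, (hri _).2 le_rfl⟩, hby⟩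
  · intro h
    have hli : ∀ a b c : L, f a b ≤ c ↔ a ≤ li c b := fun a b c => (hres a b c).2
    obtain ⟨c, hc, hcb⟩ := (fmul_Ici_inter_Iic_nonempty_iff hli x a b).1
      (h _ _ (isLatFilter_Ici a) (isLatIdeal_Iic b) le_rfl le_rfl)
    exact hx.mem_of_le hc ((hri c).1 hcb)
end

section
/- (Compactness for substructural logic.) Let Γ be a set of substructural formulas. Say a SUB-model 𝔑 = (𝔉, V) on a frame 𝔉 = (X, ⊑, Y, R) is a model of Γ if ⟦γ⟧_𝔑 = X for every γ ∈ Γ. Then Γ has a model if and only if every finite subset of Γ has a model. -/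
/-!
If every finite subset of `Γ` has a model, pick a model `M s` of each finite `s ⊆ Γ` and form
the ultraproduct of the `M s` along an ultrafilter on the finite subsets of `Γ` that refines
`atTop`. Every clause of the semantics (the polars, `R^∂`, the extents of `→` and `←`, the
intent of `∘`) is a bounded universal quantifier over points, so Łoś's theorem holds: the extent
and intent of each formula in the ultraproduct are the ultraproducts of its coordinatewise extents
and intents. Each `γ ∈ Γ` is valid in `M s` for almost all `s`, hence in the ultraproduct; the
frame conditions and Galois stability of the valuation transfer coordinatewise in the same way.
-/

namespace SubCompact

/-- Substructural formulas: `p_i | ⊤ | ⊥ | φ∧φ | φ∨φ | φ∘φ | φ→φ | φ←φ`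
    (the constructor `coimp ψ φ` denotes `ψ ← φ`). -/
inductive SubF : Type where
  | pv : ℕ → SubF
  | top : SubF
  | bot : SubF
  | conj : SubF → SubF → SubF
  | disj : SubF → SubF → SubF
  | fuse : SubF → SubF → SubF
  | imp : SubF → SubF → SubF
  | coimp : SubF → SubF → SubF

variable {X Y : Type*}

/-- The upper Galois polar `U^⊥ = {y : ∀ x ∈ U, x ⊑ y}`. -/
def polar (rel : X → Y → Prop) (U : Set X) : Set Y :=
  {y | ∀ x ∈ U, rel x y}

/-- The lower Galois polar `^⊥V = {x : ∀ y ∈ V, x ⊑ y}`. -/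
def lpolar (rel : X → Y → Prop) (V : Set Y) : Set X :=
  {x | ∀ y ∈ V, rel x y}

/-- `y R^∂ u u'` iff `∀ x, x R u u' → x ⊑ y`. -/
def Rdual (rel : X → Y → Prop) (R : X → X → X → Prop) (y : Y) (u u' : X) : Prop :=
  ∀ x : X, R x u u' → rel x y

/-- Semantics of substructural formulas in a SUB-model: the pair
    `(⟦φ⟧, ⦃φ⦄)` of the extent and intent of the formula. -/
def subSem (rel : X → Y → Prop) (R : X → X → X → Prop) (V : ℕ → Set X) :
    SubF → Set X × Set Y
  | .pv i => (V i, polar rel (V i))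
  | .top => (Set.univ, polar rel Set.univ)
  | .bot => (lpolar rel Set.univ, Set.univ)
  | .conj φ ψ =>
      ((subSem rel R V φ).1 ∩ (subSem rel R V ψ).1,
       polar rel ((subSem rel R V φ).1 ∩ (subSem rel R V ψ).1))
  | .disj φ ψ =>
      (lpolar rel ((subSem rel R V φ).2 ∩ (subSem rel R V ψ).2),
       (subSem rel R V φ).2 ∩ (subSem rel R V ψ).2)
  | .fuse φ ψ =>
      (lpolar rel {y | ∀ u v : X,
          u ∈ (subSem rel R V φ).1 → v ∈ (subSem rel R V ψ).1 → Rdual rel R y u v},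
       {y | ∀ u v : X,
          u ∈ (subSem rel R V φ).1 → v ∈ (subSem rel R V ψ).1 → Rdual rel R y u v})
  | .imp φ ψ =>
      ({x | ∀ z : X, ∀ y : Y,
          z ∈ (subSem rel R V φ).1 → y ∈ (subSem rel R V ψ).2 → Rdual rel R y z x},
       polar rel {x | ∀ z : X, ∀ y : Y,
          z ∈ (subSem rel R V φ).1 → y ∈ (subSem rel R V ψ).2 → Rdual rel R y z x})
  | .coimp ψ φ =>
      ({x | ∀ y : Y, ∀ z : X,
          y ∈ (subSem rel R V ψ).2 → z ∈ (subSem rel R V φ).1 → Rdual rel R y x z},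
       polar rel {x | ∀ y : Y, ∀ z : X,
          y ∈ (subSem rel R V ψ).2 → z ∈ (subSem rel R V φ).1 → Rdual rel R y x z})

/-- A SUB-model: a frame `(X, ⊑, Y, R)` (with both sorts nonempty and
    satisfying the D-conditions) together with a Galois-stable valuation. -/
structure SubModel where
  X : Type
  Y : Type
  hX : Nonempty X
  hY : Nonempty Y
  rel : X → Y → Prop
  R : X → X → X → Prop
  hD1 : ∀ x : X, ∃ y : Y, ¬ rel x y
  hD2 : ∀ y : Y, ∃ x : X, ¬ rel x y
  V : ℕ → Set X
  hV : ∀ i, lpolar rel (polar rel (V i)) = V i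

/-- `M` is a model of `Γ` if every formula of `Γ` holds at every point of `X`. -/
def Models (M : SubModel) (Γ : Set SubF) : Prop :=
  ∀ γ ∈ Γ, (subSem M.rel M.R M.V γ).1 = Set.univ

section Ultraproduct

variable {ι : Type*} (U : Ultrafilter ι) {α β : ι → Type*}

def ultraSet (S : ∀ i, Set (α i)) : Set (∀ i, α i) :=
  {x | ∀ᶠ i in U, x i ∈ S i}

def ultraRel (r : ∀ i, α i → β i → Prop) (x : ∀ i, α i) (y : ∀ i, β i) : Prop :=
  ∀ᶠ i in U, r i (x i) (y i)

def ultraRel₃ (R : ∀ i, α i → α i → α i → Prop) (x u v : ∀ i, α i) : Prop :=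
  ∀ᶠ i in U, R i (x i) (u i) (v i)

theorem ultraSet_univ : ultraSet U (fun i => (Set.univ : Set (α i))) = Set.univ :=
  Set.eq_univ_of_forall fun _ => Filter.Eventually.of_forall fun _ => trivial

theorem ultraSet_inter (A B : ∀ i, Set (α i)) :
    ultraSet U (fun i => A i ∩ B i) = ultraSet U A ∩ ultraSet U B :=
  Set.ext fun _ => Filter.eventually_and

/-- Counterexamples on a `U`-large set of coordinates glue into one counterexample in the
product. -/
theorem forall_mem_ultraSet_iff [∀ i, Nonempty (α i)] (A : ∀ i, Set (α i))
    (P : ∀ i, α i → Prop) :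
    (∀ x ∈ ultraSet U A, ∀ᶠ i in U, P i (x i)) ↔ ∀ᶠ i in U, ∀ a ∈ A i, P i a := by
  refine ⟨fun h => ?_, fun h x hx => by filter_upwards [h, hx] with i hi hxi using hi _ hxi⟩
  by_contra hnot
  have hbad : ∀ᶠ i in U, ∃ a ∈ A i, ¬ P i a := by
    simpa only [not_forall, exists_prop] using Ultrafilter.eventually_not.mpr hnot
  classical
  let x : ∀ i, α i := fun i =>
    if hi : ∃ a ∈ A i, ¬ P i a then hi.choose else Classical.arbitrary _
  have hx : ∀ᶠ i in U, x i ∈ A i ∧ ¬ P i (x i) := by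
    filter_upwards [hbad] with i hi
    simpa only [x, dif_pos hi] using hi.choose_spec
  obtain ⟨i, hi, hPi⟩ := (hx.and (h x (hx.mono fun _ => And.left))).exists
  exact hi.2 hPi

theorem forall₂_mem_ultraSet_iff [∀ i, Nonempty (α i)] [∀ i, Nonempty (β i)]
    (A : ∀ i, Set (α i)) (B : ∀ i, Set (β i)) (P : ∀ i, α i → β i → Prop) :
    (∀ a b, a ∈ ultraSet U A → b ∈ ultraSet U B → ∀ᶠ i in U, P i (a i) (b i)) ↔
      ∀ᶠ i in U, ∀ a b, a ∈ A i → b ∈ B i → P i a b :=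
  calc _ ↔ ∀ a ∈ ultraSet U A, ∀ b ∈ ultraSet U B, ∀ᶠ i in U, P i (a i) (b i) :=
        ⟨fun h a ha b hb => h a b ha hb, fun h a b ha hb => h a ha b hb⟩
    _ ↔ ∀ a ∈ ultraSet U A, ∀ᶠ i in U, ∀ b ∈ B i, P i (a i) b :=
        forall₂_congr fun a _ => forall_mem_ultraSet_iff U B (fun i b => P i (a i) b)
    _ ↔ ∀ᶠ i in U, ∀ a ∈ A i, ∀ b ∈ B i, P i a b :=
        forall_mem_ultraSet_iff U A (fun i a => ∀ b ∈ B i, P i a b)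
    _ ↔ _ := by simp only [imp_forall_iff]

theorem polar_ultraSet [∀ i, Nonempty (α i)] (r : ∀ i, α i → β i → Prop) (S : ∀ i, Set (α i)) :
    polar (ultraRel U r) (ultraSet U S) = ultraSet U fun i => polar (r i) (S i) :=
  Set.ext fun y => forall_mem_ultraSet_iff U S fun i a => r i a (y i)

theorem lpolar_ultraSet [∀ i, Nonempty (β i)] (r : ∀ i, α i → β i → Prop)
    (S : ∀ i, Set (β i)) :
    lpolar (ultraRel U r) (ultraSet U S) = ultraSet U fun i => lpolar (r i) (S i) :=
  Set.ext fun x => forall_mem_ultraSet_iff U S fun i b => r i (x i) b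

variable [∀ i, Nonempty (α i)] (r : ∀ i, α i → β i → Prop) (R : ∀ i, α i → α i → α i → Prop)

theorem rdual_ultraRel (y : ∀ i, β i) (u v : ∀ i, α i) :
    Rdual (ultraRel U r) (ultraRel₃ U R) y u v ↔
      ∀ᶠ i in U, Rdual (r i) (R i) (y i) (u i) (v i) :=
  forall_mem_ultraSet_iff U (fun i => {x | R i x (u i) (v i)}) fun i x => r i x (y i)

theorem fuseIntent_ultraSet (A B : ∀ i, Set (α i)) :
    {y | ∀ u v, u ∈ ultraSet U A → v ∈ ultraSet U B → Rdual (ultraRel U r) (ultraRel₃ U R) y u v}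
      = ultraSet U fun i => {y | ∀ u v, u ∈ A i → v ∈ B i → Rdual (r i) (R i) y u v} :=
  Set.ext fun y => by
    simp only [Set.mem_ofPred_eq, rdual_ultraRel]
    exact forall₂_mem_ultraSet_iff U A B _

theorem impExtent_ultraSet [∀ i, Nonempty (β i)] (A : ∀ i, Set (α i)) (B : ∀ i, Set (β i)) :
    {x | ∀ z y, z ∈ ultraSet U A → y ∈ ultraSet U B → Rdual (ultraRel U r) (ultraRel₃ U R) y z x}
      = ultraSet U fun i => {x | ∀ z y, z ∈ A i → y ∈ B i → Rdual (r i) (R i) y z x} :=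
  Set.ext fun x => by
    simp only [Set.mem_ofPred_eq, rdual_ultraRel]
    exact forall₂_mem_ultraSet_iff U A B fun i z y => Rdual (r i) (R i) y z (x i)

theorem coimpExtent_ultraSet [∀ i, Nonempty (β i)] (A : ∀ i, Set (α i)) (B : ∀ i, Set (β i)) :
    {x | ∀ y z, y ∈ ultraSet U B → z ∈ ultraSet U A → Rdual (ultraRel U r) (ultraRel₃ U R) y x z}
      = ultraSet U fun i => {x | ∀ y z, y ∈ B i → z ∈ A i → Rdual (r i) (R i) y x z} :=
  Set.ext fun x => by
    simp only [Set.mem_ofPred_eq, rdual_ultraRel]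
    exact forall₂_mem_ultraSet_iff U B A fun i y z => Rdual (r i) (R i) y (x i) z

theorem subSem_ultraproduct [∀ i, Nonempty (β i)] (V : ∀ i, ℕ → Set (α i)) (φ : SubF) :
    subSem (ultraRel U r) (ultraRel₃ U R) (fun k => ultraSet U fun i => V i k) φ =
      (ultraSet U fun i => (subSem (r i) (R i) (V i) φ).1,
        ultraSet U fun i => (subSem (r i) (R i) (V i) φ).2) := by
  induction φ with
  | pv k => simp only [subSem, polar_ultraSet]
  | top => simp only [subSem, ← ultraSet_univ U, polar_ultraSet]
  | bot => simp only [subSem, ← ultraSet_univ U, lpolar_ultraSet]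
  | conj φ ψ ih₁ ih₂ => simp only [subSem, ih₁, ih₂, ← ultraSet_inter, polar_ultraSet]
  | disj φ ψ ih₁ ih₂ => simp only [subSem, ih₁, ih₂, ← ultraSet_inter, lpolar_ultraSet]
  | fuse φ ψ ih₁ ih₂ => simp only [subSem, ih₁, ih₂, fuseIntent_ultraSet, lpolar_ultraSet]
  | imp φ ψ ih₁ ih₂ => simp only [subSem, ih₁, ih₂, impExtent_ultraSet, polar_ultraSet]
  | coimp ψ φ ih₁ ih₂ => simp only [subSem, ih₁, ih₂, coimpExtent_ultraSet, polar_ultraSet]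

end Ultraproduct

instance (M : SubModel) : Nonempty M.X := M.hX

instance (M : SubModel) : Nonempty M.Y := M.hY

def SubModel.ultraproduct {ι : Type} (U : Ultrafilter ι) (M : ι → SubModel) : SubModel where
  X := ∀ i, (M i).X
  Y := ∀ i, (M i).Y
  hX := inferInstance
  hY := inferInstance
  rel := ultraRel U fun i => (M i).rel
  R := ultraRel₃ U fun i => (M i).R
  hD1 x := by
    choose y hy using fun i => (M i).hD1 (x i)
    exact ⟨y, fun h => let ⟨i, hi⟩ := h.exists; hy i hi⟩
  hD2 y := by
    choose x hx using fun i => (M i).hD2 (y i)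
    exact ⟨x, fun h => let ⟨i, hi⟩ := h.exists; hx i hi⟩
  V k := ultraSet U fun i => (M i).V k
  hV k := by simp only [polar_ultraSet, lpolar_ultraSet, (M _).hV]

theorem SubModel.models_ultraproduct {ι : Type} (U : Ultrafilter ι) (M : ι → SubModel)
    {Γ : Set SubF} (h : ∀ γ ∈ Γ, ∀ᶠ i in U, Models (M i) {γ}) :
    Models (SubModel.ultraproduct U M) Γ := fun γ hγ => by
  have hsem := subSem_ultraproduct U (fun i => (M i).rel) (fun i => (M i).R) (fun i => (M i).V) γ
  refine (congrArg Prod.fst hsem).trans (Set.eq_univ_of_forall fun x => ?_)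
  filter_upwards [h γ hγ] with i hi
  rw [hi γ rfl]
  trivial

/-- Compactness for substructural logic: a set of substructural formulas has a
    model iff every finite subset of it has a model. -/
theorem compactness (Γ : Set SubF) :
    (∃ M : SubModel, Models M Γ) ↔
      ∀ F : Set SubF, F ⊆ Γ → F.Finite → ∃ M : SubModel, Models M F := by
  refine ⟨fun ⟨M, hM⟩ F hF _ => ⟨M, fun γ hγ => hM γ (hF hγ)⟩, fun h => ?_⟩
  choose M hM using fun s : Finset Γ =>
    h (Subtype.val '' (s : Set Γ)) (by simp) (s.finite_toSet.image _)
  classical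
  let U := Ultrafilter.of (Filter.atTop : Filter (Finset Γ))
  refine ⟨SubModel.ultraproduct U M, SubModel.models_ultraproduct U M fun γ hγ => ?_⟩
  have hcontains : ∀ᶠ s : Finset Γ in U, ⟨γ, hγ⟩ ∈ s :=
    Ultrafilter.of_le _ ((Filter.eventually_ge_atTop {⟨γ, hγ⟩}).mono fun _ hs =>
      hs (Finset.mem_singleton_self _))
  filter_upwards [hcontains] with s hs γ' rfl
  exact hM s γ' ⟨_, hs, rfl⟩

end SubCompact
end

section
/- (Downward Löwenheim–Skolem for substructural logic.) Let Γ be a set of substructural formulas. Say a SUB-model 𝔑 = (𝔉, V) on a frame 𝔉 = (X, ⊑, Y, R) is a model of Γ if ⟦γ⟧_𝔑 = X for every γ ∈ Γ. If Γ has a model whose frame has infinite disjoint union X ⊎ Y, then Γ has a model whose frame satisfies that X ⊎ Y is countably infinite. -/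
namespace SubLS

/-- Substructural formulas: `p_i | ⊤ | ⊥ | φ∧φ | φ∨φ | φ∘φ | φ→φ | φ←φ`
    (the constructor `coimp ψ φ` denotes `ψ ← φ`). -/
inductive SubF : Type where
  | pv : ℕ → SubF
  | top : SubF
  | bot : SubF
  | conj : SubF → SubF → SubF
  | disj : SubF → SubF → SubF
  | fuse : SubF → SubF → SubF
  | imp : SubF → SubF → SubF
  | coimp : SubF → SubF → SubF

variable {X Y : Type*}

/-- The upper Galois polar `U^⊥ = {y : ∀ x ∈ U, x ⊑ y}`. -/
def polar (rel : X → Y → Prop) (U : Set X) : Set Y :=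
  {y | ∀ x ∈ U, rel x y}

/-- The lower Galois polar `^⊥V = {x : ∀ y ∈ V, x ⊑ y}`. -/
def lpolar (rel : X → Y → Prop) (V : Set Y) : Set X :=
  {x | ∀ y ∈ V, rel x y}

/-- `y R^∂ u u'` iff `∀ x, x R u u' → x ⊑ y`. -/
def Rdual (rel : X → Y → Prop) (R : X → X → X → Prop) (y : Y) (u u' : X) : Prop :=
  ∀ x : X, R x u u' → rel x y

/-- Semantics of substructural formulas in a SUB-model: the pair
    `(⟦φ⟧, ⦃φ⦄)` of the extent and intent of the formula. -/
def subSem (rel : X → Y → Prop) (R : X → X → X → Prop) (V : ℕ → Set X) :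
    SubF → Set X × Set Y
  | .pv i => (V i, polar rel (V i))
  | .top => (Set.univ, polar rel Set.univ)
  | .bot => (lpolar rel Set.univ, Set.univ)
  | .conj φ ψ =>
      ((subSem rel R V φ).1 ∩ (subSem rel R V ψ).1,
       polar rel ((subSem rel R V φ).1 ∩ (subSem rel R V ψ).1))
  | .disj φ ψ =>
      (lpolar rel ((subSem rel R V φ).2 ∩ (subSem rel R V ψ).2),
       (subSem rel R V φ).2 ∩ (subSem rel R V ψ).2)
  | .fuse φ ψ =>
      (lpolar rel {y | ∀ u v : X,
          u ∈ (subSem rel R V φ).1 → v ∈ (subSem rel R V ψ).1 → Rdual rel R y u v},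
       {y | ∀ u v : X,
          u ∈ (subSem rel R V φ).1 → v ∈ (subSem rel R V ψ).1 → Rdual rel R y u v})
  | .imp φ ψ =>
      ({x | ∀ z : X, ∀ y : Y,
          z ∈ (subSem rel R V φ).1 → y ∈ (subSem rel R V ψ).2 → Rdual rel R y z x},
       polar rel {x | ∀ z : X, ∀ y : Y,
          z ∈ (subSem rel R V φ).1 → y ∈ (subSem rel R V ψ).2 → Rdual rel R y z x})
  | .coimp ψ φ =>
      ({x | ∀ y : Y, ∀ z : X,
          y ∈ (subSem rel R V ψ).2 → z ∈ (subSem rel R V φ).1 → Rdual rel R y x z},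
       polar rel {x | ∀ y : Y, ∀ z : X,
          y ∈ (subSem rel R V ψ).2 → z ∈ (subSem rel R V φ).1 → Rdual rel R y x z})

/-- A SUB-model: a frame `(X, ⊑, Y, R)` (with both sorts nonempty and
    satisfying the D-conditions) together with a Galois-stable valuation. -/
structure SubModel where
  X : Type
  Y : Type
  hX : Nonempty X
  hY : Nonempty Y
  rel : X → Y → Prop
  R : X → X → X → Prop
  hD1 : ∀ x : X, ∃ y : Y, ¬ rel x y
  hD2 : ∀ y : Y, ∃ x : X, ¬ rel x y
  V : ℕ → Set X
  hV : ∀ i, lpolar rel (polar rel (V i)) = V i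

/-- `M` is a model of `Γ` if every formula of `Γ` holds at every point of `X`. -/
def Models (M : SubModel) (Γ : Set SubF) : Prop :=
  ∀ γ ∈ Γ, (subSem M.rel M.R M.V γ).1 = Set.univ

open Set

/-! Close a countably infinite subset of `X ⊕ Y` under Skolem witnesses: for every formula
(pair) and every point at which a polar, a fusion intent or an implication extent fails, add
one counterexample tuple. As there are countably many formulas, the hull stays countable. On
the hull every Galois polar and every `R^∂`-quantifier of the restricted frame agrees with the
original one, so by induction on formulas the restricted model computes exactly the
restrictions of `⟦φ⟧` and `⦃φ⦄`, and in particular still validates `Γ`. -/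

def SubF.encode : SubF → ℕ
  | .pv i => Nat.pair 0 i
  | .top => Nat.pair 1 0
  | .bot => Nat.pair 2 0
  | .conj φ ψ => Nat.pair 3 (Nat.pair φ.encode ψ.encode)
  | .disj φ ψ => Nat.pair 4 (Nat.pair φ.encode ψ.encode)
  | .fuse φ ψ => Nat.pair 5 (Nat.pair φ.encode ψ.encode)
  | .imp φ ψ => Nat.pair 6 (Nat.pair φ.encode ψ.encode)
  | .coimp φ ψ => Nat.pair 7 (Nat.pair φ.encode ψ.encode)

theorem SubF.encode_injective : Function.Injective SubF.encode := by
  intro φ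
  induction φ <;> intro ψ h <;> cases ψ <;> simp only [SubF.encode, Nat.pair_eq_pair] at h <;>
    grind

instance : Countable SubF := SubF.encode_injective.countable

theorem exists_countable_superset_closed {α ι : Type*} [Countable ι] (f : ι → α → Set α)
    (hf : ∀ i a, (f i a).Countable) {s : Set α} (hs : s.Countable) :
    ∃ t, s ⊆ t ∧ t.Countable ∧ ∀ i, ∀ a ∈ t, f i a ⊆ t := by
  let step : Set α → Set α := fun T => T ∪ ⋃ i, ⋃ a ∈ T, f i a
  refine ⟨⋃ n, step^[n] s, subset_iUnion (fun n => step^[n] s) 0, ?_, ?_⟩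
  · refine countable_iUnion fun n => ?_
    induction n with
    | zero => exact hs
    | succ n ih =>
      rw [Function.iterate_succ_apply']
      exact ih.union (countable_iUnion fun i => ih.biUnion fun a _ => hf i a)
  · intro i a ha
    obtain ⟨n, hn⟩ := mem_iUnion.1 ha
    refine Subset.trans ?_ (subset_iUnion _ (n + 1))
    intro b hb
    rw [Function.iterate_succ_apply']
    simp only [step, mem_union, mem_iUnion]
    exact Or.inr ⟨i, a, hn, hb⟩

section Restriction

variable (rel : X → Y → Prop)

theorem polar_preimage_val {A : Set X} {B : Set Y} {U : Set X}
    (hU : ∀ y ∈ B, y ∉ polar rel U → ∃ x ∈ A, x ∈ U ∧ ¬ rel x y) :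
    polar (fun (a : A) (b : B) => rel a b) (Subtype.val ⁻¹' U) =
      Subtype.val ⁻¹' polar rel U := by
  ext b
  refine ⟨fun hb => by_contra fun hnb => ?_, fun hb a ha => hb a ha⟩
  obtain ⟨x, hxA, hxU, hxb⟩ := hU b b.2 hnb
  exact hxb (hb ⟨x, hxA⟩ hxU)

theorem lpolar_preimage_val {A : Set X} {B : Set Y} {W : Set Y}
    (hW : ∀ x ∈ A, x ∉ lpolar rel W → ∃ y ∈ B, y ∈ W ∧ ¬ rel x y) :
    lpolar (fun (a : A) (b : B) => rel a b) (Subtype.val ⁻¹' W) =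
      Subtype.val ⁻¹' lpolar rel W := by
  ext a
  refine ⟨fun ha => by_contra fun hna => ?_, fun ha b hb => ha b hb⟩
  obtain ⟨y, hyB, hyW, hay⟩ := hW a a.2 hna
  exact hay (ha ⟨y, hyB⟩ hyW)

theorem exists_of_notMem_polar {U : Set X} {y : Y} (hy : y ∉ polar rel U) :
    ∃ x, x ∈ U ∧ ¬ rel x y := by
  simpa [polar] using hy

theorem exists_of_notMem_lpolar {W : Set Y} {x : X} (hx : x ∉ lpolar rel W) :
    ∃ y, y ∈ W ∧ ¬ rel x y := by
  simpa [lpolar] using hx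

variable (R : X → X → X → Prop) (V : ℕ → Set X)

theorem exists_of_notMem_subSem_fuse_snd (φ ψ : SubF) (y : Y)
    (hy : y ∉ (subSem rel R V (.fuse φ ψ)).2) :
    ∃ u v w, u ∈ (subSem rel R V φ).1 ∧ v ∈ (subSem rel R V ψ).1 ∧ R w u v ∧ ¬ rel w y := by
  simpa [subSem, Rdual] using hy

theorem exists_of_notMem_subSem_imp_fst (φ ψ : SubF) (x : X)
    (hx : x ∉ (subSem rel R V (.imp φ ψ)).1) :
    ∃ z y w, z ∈ (subSem rel R V φ).1 ∧ y ∈ (subSem rel R V ψ).2 ∧ R w z x ∧ ¬ rel w y := by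
  simpa [subSem, Rdual] using hx

theorem exists_of_notMem_subSem_coimp_fst (ψ φ : SubF) (x : X)
    (hx : x ∉ (subSem rel R V (.coimp ψ φ)).1) :
    ∃ y z w, y ∈ (subSem rel R V ψ).2 ∧ z ∈ (subSem rel R V φ).1 ∧ R w x z ∧ ¬ rel w y := by
  simpa [subSem, Rdual] using hx

variable (A : Set X) (B : Set Y)

structure IsSkolemClosed : Prop where
  polar_witness : ∀ φ, ∀ y ∈ B, y ∉ polar rel (subSem rel R V φ).1 →
    ∃ x ∈ A, x ∈ (subSem rel R V φ).1 ∧ ¬ rel x y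
  lpolar_witness : ∀ φ, ∀ x ∈ A, x ∉ lpolar rel (subSem rel R V φ).2 →
    ∃ y ∈ B, y ∈ (subSem rel R V φ).2 ∧ ¬ rel x y
  fuse_witness : ∀ φ ψ, ∀ y ∈ B, y ∉ (subSem rel R V (.fuse φ ψ)).2 →
    ∃ u ∈ A, ∃ v ∈ A, ∃ w ∈ A, u ∈ (subSem rel R V φ).1 ∧ v ∈ (subSem rel R V ψ).1 ∧
      R w u v ∧ ¬ rel w y
  imp_witness : ∀ φ ψ, ∀ x ∈ A, x ∉ (subSem rel R V (.imp φ ψ)).1 →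
    ∃ z ∈ A, ∃ y ∈ B, ∃ w ∈ A, z ∈ (subSem rel R V φ).1 ∧ y ∈ (subSem rel R V ψ).2 ∧
      R w z x ∧ ¬ rel w y
  coimp_witness : ∀ ψ φ, ∀ x ∈ A, x ∉ (subSem rel R V (.coimp ψ φ)).1 →
    ∃ y ∈ B, ∃ z ∈ A, ∃ w ∈ A, y ∈ (subSem rel R V ψ).2 ∧ z ∈ (subSem rel R V φ).1 ∧
      R w x z ∧ ¬ rel w y

variable {rel R V A B}

local notation "sem" => subSem rel R V
local notation "sem'" => subSem (fun (a : A) (b : B) => rel a b) (fun a b c : A => R a b c)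
  (fun i => Subtype.val ⁻¹' V i)

theorem IsSkolemClosed.fuse_snd_restrict (h : IsSkolemClosed rel R V A B) {φ ψ : SubF}
    (hφ : (sem' φ).1 = Subtype.val ⁻¹' (sem φ).1) (hψ : (sem' ψ).1 = Subtype.val ⁻¹' (sem ψ).1) :
    (sem' (.fuse φ ψ)).2 = Subtype.val ⁻¹' (sem (.fuse φ ψ)).2 := by
  ext y
  simp only [subSem, hφ, hψ]
  refine ⟨fun hy => by_contra fun hny => ?_, fun hy u v hu hv w hw => hy u v hu hv w hw⟩
  obtain ⟨u, hu, v, hv, w, hw, huφ, hvψ, hR, hwy⟩ := h.fuse_witness φ ψ y y.2 hny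
  exact hwy (hy ⟨u, hu⟩ ⟨v, hv⟩ huφ hvψ ⟨w, hw⟩ hR)

theorem IsSkolemClosed.imp_fst_restrict (h : IsSkolemClosed rel R V A B) {φ ψ : SubF}
    (hφ : (sem' φ).1 = Subtype.val ⁻¹' (sem φ).1) (hψ : (sem' ψ).2 = Subtype.val ⁻¹' (sem ψ).2) :
    (sem' (.imp φ ψ)).1 = Subtype.val ⁻¹' (sem (.imp φ ψ)).1 := by
  ext x
  simp only [subSem, hφ, hψ]
  refine ⟨fun hx => by_contra fun hnx => ?_, fun hx z y hz hy w hw => hx z y hz hy w hw⟩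
  obtain ⟨z, hz, y, hy, w, hw, hzφ, hyψ, hR, hwy⟩ := h.imp_witness φ ψ x x.2 hnx
  exact hwy (hx ⟨z, hz⟩ ⟨y, hy⟩ hzφ hyψ ⟨w, hw⟩ hR)

theorem IsSkolemClosed.coimp_fst_restrict (h : IsSkolemClosed rel R V A B) {ψ φ : SubF}
    (hψ : (sem' ψ).2 = Subtype.val ⁻¹' (sem ψ).2) (hφ : (sem' φ).1 = Subtype.val ⁻¹' (sem φ).1) :
    (sem' (.coimp ψ φ)).1 = Subtype.val ⁻¹' (sem (.coimp ψ φ)).1 := by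
  ext x
  simp only [subSem, hφ, hψ]
  refine ⟨fun hx => by_contra fun hnx => ?_, fun hx y z hy hz w hw => hx y z hy hz w hw⟩
  obtain ⟨y, hy, z, hz, w, hw, hyψ, hzφ, hR, hwy⟩ := h.coimp_witness ψ φ x x.2 hnx
  exact hwy (hx ⟨y, hy⟩ ⟨z, hz⟩ hyψ hzφ ⟨w, hw⟩ hR)

theorem IsSkolemClosed.subSem_restrict (h : IsSkolemClosed rel R V A B) (φ : SubF) :
    sem' φ = Prod.map (Subtype.val ⁻¹' ·) (Subtype.val ⁻¹' ·) (sem φ) := by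
  induction φ with
  | pv i => exact Prod.ext rfl (polar_preimage_val rel (h.polar_witness (.pv i)))
  | top => exact Prod.ext preimage_univ.symm (polar_preimage_val rel (h.polar_witness .top))
  | bot => exact Prod.ext (lpolar_preimage_val rel (h.lpolar_witness .bot)) preimage_univ.symm
  | conj φ ψ ihφ ihψ =>
    refine Prod.ext ?_ ?_ <;> simp only [subSem, ihφ, ihψ, Prod.map_fst]
    · rfl
    · exact polar_preimage_val rel (h.polar_witness (.conj φ ψ))
  | disj φ ψ ihφ ihψ =>
    refine Prod.ext ?_ ?_ <;> simp only [subSem, ihφ, ihψ, Prod.map_snd]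
    · exact lpolar_preimage_val rel (h.lpolar_witness (.disj φ ψ))
    · rfl
  | fuse φ ψ ihφ ihψ =>
    have hint := h.fuse_snd_restrict (congrArg Prod.fst ihφ) (congrArg Prod.fst ihψ)
    exact Prod.ext ((congrArg (lpolar _) hint).trans
      (lpolar_preimage_val rel (h.lpolar_witness (.fuse φ ψ)))) hint
  | imp φ ψ ihφ ihψ =>
    have hext := h.imp_fst_restrict (congrArg Prod.fst ihφ) (congrArg Prod.snd ihψ)
    exact Prod.ext hext ((congrArg (polar _) hext).trans
      (polar_preimage_val rel (h.polar_witness (.imp φ ψ))))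
  | coimp ψ φ ihψ ihφ =>
    have hext := h.coimp_fst_restrict (congrArg Prod.snd ihψ) (congrArg Prod.fst ihφ)
    exact Prod.ext hext ((congrArg (polar _) hext).trans
      (polar_preimage_val rel (h.polar_witness (.coimp ψ φ))))

theorem IsSkolemClosed.exists_not_rel_right (h : IsSkolemClosed rel R V A B)
    (hD : ∀ x, ∃ y, ¬ rel x y) {x : X} (hx : x ∈ A) : ∃ y ∈ B, ¬ rel x y := by
  obtain ⟨y, hy, -, hxy⟩ := h.lpolar_witness .bot x hx fun hbot =>
    (hD x).elim fun y hxy => hxy (hbot y trivial)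
  exact ⟨y, hy, hxy⟩

theorem IsSkolemClosed.exists_not_rel_left (h : IsSkolemClosed rel R V A B)
    (hD : ∀ y, ∃ x, ¬ rel x y) {y : Y} (hy : y ∈ B) : ∃ x ∈ A, ¬ rel x y := by
  obtain ⟨x, hx, -, hxy⟩ := h.polar_witness .top y hy fun htop =>
    (hD y).elim fun x hxy => hxy (htop x trivial)
  exact ⟨x, hx, hxy⟩

theorem IsSkolemClosed.nonempty (h : IsSkolemClosed rel R V A B)
    (hD₁ : ∀ x, ∃ y, ¬ rel x y) (hD₂ : ∀ y, ∃ x, ¬ rel x y) (hAB : A.Nonempty ∨ B.Nonempty) :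
    A.Nonempty ∧ B.Nonempty := by
  rcases hAB with ⟨x, hx⟩ | ⟨y, hy⟩
  · obtain ⟨y, hy, -⟩ := h.exists_not_rel_right hD₁ hx
    exact ⟨⟨x, hx⟩, ⟨y, hy⟩⟩
  · obtain ⟨x, hx, -⟩ := h.exists_not_rel_left hD₂ hy
    exact ⟨⟨x, hx⟩, ⟨y, hy⟩⟩

variable (rel R V)

theorem exists_countable_isSkolemClosed [Nonempty X] [Nonempty Y] {s : Set (X ⊕ Y)}
    (hs : s.Countable) :
    ∃ t, s ⊆ t ∧ t.Countable ∧ IsSkolemClosed rel R V (Sum.inl ⁻¹' t) (Sum.inr ⁻¹' t) := by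
  choose! px hp using fun φ (y : Y) => exists_of_notMem_polar rel (U := (sem φ).1) (y := y)
  choose! ly hl using fun φ (x : X) => exists_of_notMem_lpolar rel (W := (sem φ).2) (x := x)
  choose! fu fv fw hf using exists_of_notMem_subSem_fuse_snd rel R V
  choose! iz iy iw hi using exists_of_notMem_subSem_imp_fst rel R V
  choose! cy cz cw hc using exists_of_notMem_subSem_coimp_fst rel R V
  let witnesses : SubF × SubF → X ⊕ Y → Set (X ⊕ Y) := fun (φ, ψ) => Sum.elim
    (fun x => {.inr (ly φ x), .inl (iz φ ψ x), .inr (iy φ ψ x), .inl (iw φ ψ x),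
      .inr (cy φ ψ x), .inl (cz φ ψ x), .inl (cw φ ψ x)})
    (fun y => {.inl (px φ y), .inl (fu φ ψ y), .inl (fv φ ψ y), .inl (fw φ ψ y)})
  obtain ⟨t, hst, htc, hclosed⟩ := exists_countable_superset_closed witnesses
    (by rintro ⟨φ, ψ⟩ (x | y) <;> simp [witnesses]) hs
  have hclosed_inl : ∀ φ ψ x, .inl x ∈ t → .inr (ly φ x) ∈ t ∧ .inl (iz φ ψ x) ∈ t ∧
      .inr (iy φ ψ x) ∈ t ∧ .inl (iw φ ψ x) ∈ t ∧ .inr (cy φ ψ x) ∈ t ∧ .inl (cz φ ψ x) ∈ t ∧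
      .inl (cw φ ψ x) ∈ t := fun φ ψ x hx => by
    simpa [witnesses, insert_subset_iff] using hclosed (φ, ψ) _ hx
  have hclosed_inr : ∀ φ ψ y, .inr y ∈ t → .inl (px φ y) ∈ t ∧ .inl (fu φ ψ y) ∈ t ∧
      .inl (fv φ ψ y) ∈ t ∧ .inl (fw φ ψ y) ∈ t := fun φ ψ y hy => by
    simpa [witnesses, insert_subset_iff] using hclosed (φ, ψ) _ hy
  refine ⟨t, hst, htc, ⟨?_, ?_, ?_, ?_, ?_⟩⟩
  · intro φ y hy hny
    exact ⟨px φ y, (hclosed_inr φ φ y hy).1, hp φ y hny⟩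
  · intro φ x hx hnx
    exact ⟨ly φ x, (hclosed_inl φ φ x hx).1, hl φ x hnx⟩
  · intro φ ψ y hy hny
    obtain ⟨-, hu, hv, hw⟩ := hclosed_inr φ ψ y hy
    exact ⟨_, hu, _, hv, _, hw, hf φ ψ y hny⟩
  · intro φ ψ x hx hnx
    obtain ⟨-, hz, hy, hw, -⟩ := hclosed_inl φ ψ x hx
    exact ⟨_, hz, _, hy, _, hw, hi φ ψ x hnx⟩
  · intro ψ φ x hx hnx
    obtain ⟨-, -, -, -, hy, hz, hw⟩ := hclosed_inl ψ φ x hx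
    exact ⟨_, hy, _, hz, _, hw, hc ψ φ x hnx⟩

end Restriction

theorem infinite_preimage_inl_sum_preimage_inr {t : Set (X ⊕ Y)}
    (ht : t.Infinite) : Infinite (Sum.inl ⁻¹' t ⊕ Sum.inr ⁻¹' t) := by
  have := mt finite_preimage_inl_and_inr.1 ht
  rw [infinite_sum, infinite_coe_iff, infinite_coe_iff]
  tauto

def SubModel.restrict (M : SubModel) {A : Set M.X} {B : Set M.Y}
    (h : IsSkolemClosed M.rel M.R M.V A B) (hA : A.Nonempty) (hB : B.Nonempty) : SubModel where
  X := A
  Y := B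
  hX := hA.to_subtype
  hY := hB.to_subtype
  rel a b := M.rel a b
  R a b c := M.R a b c
  hD1 a :=
    let ⟨y, hy, hay⟩ := h.exists_not_rel_right M.hD1 a.2
    ⟨⟨y, hy⟩, hay⟩
  hD2 b :=
    let ⟨x, hx, hxb⟩ := h.exists_not_rel_left M.hD2 b.2
    ⟨⟨x, hx⟩, hxb⟩
  V i := Subtype.val ⁻¹' M.V i
  hV i := (congrArg (lpolar _) (polar_preimage_val M.rel (h.polar_witness (.pv i)))).trans <|
    (lpolar_preimage_val M.rel (h.lpolar_witness (.pv i))).trans (congrArg _ (M.hV i))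

theorem Models.restrict {M : SubModel} {Γ : Set SubF} (hM : Models M Γ) {A : Set M.X}
    {B : Set M.Y} (h : IsSkolemClosed M.rel M.R M.V A B) (hA : A.Nonempty) (hB : B.Nonempty) :
    Models (M.restrict h hA hB) Γ := fun γ hγ =>
  (congrArg Prod.fst (h.subSem_restrict γ)).trans <| by
    rw [Prod.map_fst, hM γ hγ, preimage_univ]; rfl

/-- Downward Löwenheim–Skolem for substructural logic: if `Γ` has a model
    whose frame has infinite disjoint union `X ⊎ Y`, then `Γ` has a model whose
    frame satisfies that `X ⊎ Y` is countably infinite. -/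
theorem downward_lowenheim_skolem (Γ : Set SubF)
    (h : ∃ M : SubModel, Models M Γ ∧ Infinite (M.X ⊕ M.Y)) :
    ∃ M : SubModel, Models M Γ ∧ Countable (M.X ⊕ M.Y) ∧ Infinite (M.X ⊕ M.Y) := by
  obtain ⟨M, hM, hinf⟩ := h
  have := M.hX
  have := M.hY
  let e := Infinite.natEmbedding (M.X ⊕ M.Y)
  obtain ⟨t, het, htc, hclosed⟩ :=
    exists_countable_isSkolemClosed M.rel M.R M.V (countable_range e)
  have ht : t.Infinite := (infinite_range_of_injective e.injective).mono het
  obtain ⟨hA, hB⟩ := hclosed.nonempty M.hD1 M.hD2 <| by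
    obtain ⟨x | y, hp⟩ := ht.nonempty
    exacts [Or.inl ⟨x, hp⟩, Or.inr ⟨y, hp⟩]
  have := (htc.preimage Sum.inl_injective).to_subtype
  have := (htc.preimage Sum.inr_injective).to_subtype
  exact ⟨M.restrict hclosed hA hB, hM.restrict hclosed hA hB,
    inferInstanceAs (Countable (Sum.inl ⁻¹' t ⊕ Sum.inr ⁻¹' t)),
    infinite_preimage_inl_sum_preimage_inr ht⟩

end SubLS
end
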